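/- arXiv:1903.08147 — 10 statements merged into one kernel-verified Lean document; each statement's English description precedes it below -/
import Mathlib

section
/- Let L be a quadratic lattice with nondegenerate integer Gram matrix G of size n, and let d₁ ∣ d₂ ∣ … ∣ dₙ be the invariant factors of G, i.e., suppose UGV = diag(d₁,…,dₙ) for some U,V ∈ GL(n,ℤ) with each dᵢ dividing dᵢ₊₁. If e ∈ L is a root, i.e., a primitive vector with k=(e,e)>0 such that 2(e,x) ∈ kℤ for all x ∈ L, then k divides 2dₙ. -/
open Matrix

/-- The square of the length of a root of a quadratic lattice divides the doubled last
invariant factor of the lattice. -/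
theorem stmt_4 (n : ℕ) (G : Matrix (Fin (n + 1)) (Fin (n + 1)) ℤ)
    (hsym : Gᵀ = G) (hdet : G.det ≠ 0)
    (U V : Matrix (Fin (n + 1)) (Fin (n + 1)) ℤ)
    (hU : IsUnit U.det) (hV : IsUnit V.det)
    (d : Fin (n + 1) → ℤ) (hUV : U * G * V = Matrix.diagonal d)
    (hchain : ∀ i j : Fin (n + 1), i ≤ j → d i ∣ d j)
    (e : Fin (n + 1) → ℤ)
    (hprim : ∀ c : ℤ, (∀ i, c ∣ e i) → IsUnit c)
    (k : ℤ) (hk : k = e ⬝ᵥ G.mulVec e) (hkpos : 0 < k)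
    (hroot : ∀ x : Fin (n + 1) → ℤ, k ∣ 2 * (e ⬝ᵥ G.mulVec x)) :
    k ∣ 2 * d (Fin.last n) := by
  classical
  -- the diagonal entries are nonzero
  have hdnz : ∀ i, d i ≠ 0 := by
    intro i hi
    have h0 : (Matrix.diagonal d).det = 0 := by
      rw [Matrix.det_diagonal]
      exact Finset.prod_eq_zero (Finset.mem_univ i) hi
    rw [← hUV, Matrix.det_mul, Matrix.det_mul] at h0
    rcases mul_eq_zero.1 h0 with h | h
    · rcases mul_eq_zero.1 h with h | h
      · exact hU.ne_zero h
      · exact hdet h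
    · exact hV.ne_zero h
  set m := Fin.last n with hm
  set D' : Matrix (Fin (n + 1)) (Fin (n + 1)) ℤ :=
    Matrix.diagonal (fun i => d m / d i) with hD'
  set B := V * D' * U with hB
  have hUG : U * G = Matrix.diagonal d * V⁻¹ := by
    have := congrArg (fun M => M * V⁻¹) hUV
    simpa [Matrix.mul_assoc, Matrix.mul_nonsing_inv _ hV] using this
  have hDD : D' * Matrix.diagonal d = d m • (1 : Matrix (Fin (n + 1)) (Fin (n + 1)) ℤ) := by
    rw [hD', Matrix.diagonal_mul_diagonal]
    have : (fun i => d m / d i * d i) = fun _ : Fin (n + 1) => d m := by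
      funext i
      exact Int.ediv_mul_cancel (hchain i m (Fin.le_last i))
    rw [this]
    ext i j
    by_cases h : i = j <;> simp [Matrix.diagonal_apply, Matrix.one_apply, h]
  have hBG : B * G = d m • (1 : Matrix (Fin (n + 1)) (Fin (n + 1)) ℤ) := by
    calc B * G = V * (D' * (U * G)) := by rw [hB, Matrix.mul_assoc, Matrix.mul_assoc]
      _ = V * (D' * Matrix.diagonal d * V⁻¹) := by rw [hUG, Matrix.mul_assoc]
      _ = V * ((d m • (1 : Matrix (Fin (n + 1)) (Fin (n + 1)) ℤ)) * V⁻¹) := by rw [hDD]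
      _ = d m • (V * V⁻¹) := by
          rw [Matrix.smul_mul, Matrix.one_mul, Matrix.mul_smul]
      _ = d m • (1 : Matrix (Fin (n + 1)) (Fin (n + 1)) ℤ) := by
          rw [Matrix.mul_nonsing_inv _ hV]
  -- k divides twice each coordinate of G *ᵥ e
  have hdvdGe : ∀ i, k ∣ 2 * (G *ᵥ e) i := by
    intro i
    have h := hroot (Pi.single i 1)
    have heq : e ⬝ᵥ G *ᵥ (Pi.single i 1) = (G *ᵥ e) i := by
      rw [Matrix.dotProduct_mulVec, ← Matrix.mulVec_transpose, hsym,
        dotProduct_single, mul_one]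
    rwa [heq] at h
  -- hence k divides 2 * d m * e i for each i
  have hdvd2 : ∀ i, k ∣ 2 * (d m * e i) := by
    intro i
    have hcoord : (B *ᵥ (G *ᵥ e)) i = d m * e i := by
      rw [Matrix.mulVec_mulVec, hBG, Matrix.smul_mulVec, Matrix.one_mulVec]
      simp
    rw [← hcoord, Matrix.mulVec, dotProduct, Finset.mul_sum]
    refine Finset.dvd_sum fun j _ => ?_
    have : 2 * (B i j * (G *ᵥ e) j) = B i j * (2 * (G *ᵥ e) j) := by ring
    rw [this]
    exact Dvd.dvd.mul_left (hdvdGe j) _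
  -- Bezout: primitivity gives a combination equal to 1
  obtain ⟨a, ha⟩ : ∃ a : Fin (n + 1) → ℤ, ∑ i, a i * e i = 1 := by
    have hPI : (Ideal.span (Set.range e)).IsPrincipal := inferInstance
    obtain ⟨c, hc⟩ := hPI
    have hcd : ∀ i, c ∣ e i := by
      intro i
      have : e i ∈ Ideal.span (Set.range e) := Ideal.subset_span ⟨i, rfl⟩
      rw [hc] at this
      exact Ideal.mem_span_singleton.1 this
    have hcu : IsUnit c := hprim c hcd
    have htop : Ideal.span (Set.range e) = ⊤ := by
      rw [hc]
      exact Ideal.span_singleton_eq_top.2 hcu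
    have h1 : (1 : ℤ) ∈ Ideal.span (Set.range e) := htop ▸ Submodule.mem_top
    obtain ⟨a, ha⟩ := (Submodule.mem_span_range_iff_exists_fun ℤ).1 h1
    exact ⟨a, by simpa [smul_eq_mul] using ha⟩
  have key : 2 * d m = ∑ i, a i * (2 * (d m * e i)) := by
    have : ∑ i, a i * (2 * (d m * e i)) = (2 * d m) * ∑ i, a i * e i := by
      rw [Finset.mul_sum]
      exact Finset.sum_congr rfl fun i _ => by ring
    rw [this, ha, mul_one]
  rw [key]
  exact Finset.dvd_sum fun i _ => Dvd.dvd.mul_left (hdvd2 i) _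
end

section
/- The quadratic lattice with Gram matrix G₂ = [[1,−1,0,0],[−1,2,0,−1],[0,0,1,−4],[0,−1,−4,2]] is isomorphic to the lattice [-15]⊕[1]⊕[1]⊕[1], i.e., there exists M ∈ GL(4,ℤ) with Mᵀ G₂ M = diag(−15,1,1,1). -/
open Matrix

/-- The quadratic lattice with Gram matrix `G₂` is isomorphic to `[-15]⊕[1]⊕[1]⊕[1]`. -/
theorem stmt_6 :
    ∃ M : Matrix (Fin 4) (Fin 4) ℤ, IsUnit M.det ∧
      Mᵀ * !![1, -1, 0, 0; -1, 2, 0, -1; 0, 0, 1, -4; 0, -1, -4, 2] * M =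
        Matrix.diagonal ![-15, 1, 1, 1] := by
  refine ⟨!![-4,-1,-1,-1; -4,-1,-1,0; -1,0,0,0; -4,-1,0,0], ?_, ?_⟩
  · have : (!![-4,-1,-1,-1; -4,-1,-1,0; -1,0,0,0; -4,-1,0,0] : Matrix (Fin 4) (Fin 4) ℤ).det = -1 := by
      decide
    rw [this]
    exact isUnit_one.neg
  · decide
end

section
/- The quadratic lattice with Gram matrix G₃ = [[1,0,0,−1],[0,2,−1,0],[0,−1,2,−3],[−1,0,−3,2]] is isomorphic to the lattice [-3]⊕[5]⊕[1]⊕[1], i.e., there exists M ∈ GL(4,ℤ) with Mᵀ G₃ M = diag(−3,5,1,1). -/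
open Matrix

/-- The quadratic lattice with Gram matrix `G₃` is isomorphic to `[-3]⊕[5]⊕[1]⊕[1]`. -/
theorem stmt_7 :
    ∃ M : Matrix (Fin 4) (Fin 4) ℤ, IsUnit M.det ∧
      Mᵀ * !![1, 0, 0, -1; 0, 2, -1, 0; 0, -1, 2, -3; -1, 0, -3, 2] * M =
        Matrix.diagonal ![-3, 5, 1, 1] := by
  refine ⟨!![-3,-3,-1,-1; -4,-3,-2,0; -2,-1,-1,0; -3,-3,-1,0], ?_, ?_⟩
  · have h : (!![-3,-3,-1,-1; -4,-3,-2,0; -2,-1,-1,0; -3,-3,-1,0] : Matrix (Fin 4) (Fin 4) ℤ).det = -1 := by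
      decide
    rw [h]
    exact isUnit_one.neg
  · decide
end

section
/- The quadratic lattice with Gram matrix G₄ = [[2,0,0,−1],[0,2,−1,−1],[0,−1,1,−2],[−1,−1,−2,2]] is isomorphic to the lattice [-23]⊕[1]⊕[1]⊕[1], i.e., there exists M ∈ GL(4,ℤ) with Mᵀ G₄ M = diag(−23,1,1,1). -/
open Matrix

/-- The quadratic lattice with Gram matrix `G₄` is isomorphic to `[-23]⊕[1]⊕[1]⊕[1]`. -/
theorem stmt_8 :
    ∃ M : Matrix (Fin 4) (Fin 4) ℤ, IsUnit M.det ∧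
      Mᵀ * !![2, 0, 0, -1; 0, 2, -1, -1; 0, -1, 1, -2; -1, -1, -2, 2] * M =
        Matrix.diagonal ![-23, 1, 1, 1] := by
  refine ⟨!![-14, -3, 0, 0; -15, -3, -1, 0; -25, -5, -1, -1; -5, -1, 0, 0], ?_, ?_⟩
  · have h : (!![-14, -3, 0, 0; -15, -3, -1, 0; -25, -5, -1, -1; -5, -1, 0, 0] : Matrix (Fin 4) (Fin 4) ℤ).det = -1 := by
      simp [Matrix.det_succ_row_zero, Fin.sum_univ_succ]; rfl
    rw [h]; exact isUnit_one.neg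
  · have ht : (!![-14, -3, 0, 0; -15, -3, -1, 0; -25, -5, -1, -1; -5, -1, 0, 0] : Matrix (Fin 4) (Fin 4) ℤ)ᵀ
        = !![-14, -15, -25, -5; -3, -3, -5, -1; 0, -1, -1, 0; 0, 0, -1, 0] := by
      ext i j; fin_cases i <;> fin_cases j <;> rfl
    have h1 : (!![-14, -15, -25, -5; -3, -3, -5, -1; 0, -1, -1, 0; 0, 0, -1, 0] : Matrix (Fin 4) (Fin 4) ℤ) *
        !![2, 0, 0, -1; 0, 2, -1, -1; 0, -1, 1, -2; -1, -1, -2, 2] =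
        !![-23, 0, 0, 69; -5, 0, 0, 14; 0, -1, 0, 3; 0, 1, -1, 2] := by
      ext i j; fin_cases i <;> fin_cases j <;>
        norm_num [Matrix.mul_apply, Fin.sum_univ_four, Matrix.vecHead, Matrix.vecTail] <;> rfl
    have h2 : (!![-23, 0, 0, 69; -5, 0, 0, 14; 0, -1, 0, 3; 0, 1, -1, 2] : Matrix (Fin 4) (Fin 4) ℤ) *
        !![-14, -3, 0, 0; -15, -3, -1, 0; -25, -5, -1, -1; -5, -1, 0, 0] =
        !![-23, 0, 0, 0; 0, 1, 0, 0; 0, 0, 1, 0; 0, 0, 0, 1] := by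
      ext i j; fin_cases i <;> fin_cases j <;>
        norm_num [Matrix.mul_apply, Fin.sum_univ_four, Matrix.vecHead, Matrix.vecTail] <;> rfl
    have hd : (Matrix.diagonal ![-23, 1, 1, 1] : Matrix (Fin 4) (Fin 4) ℤ) =
        !![-23, 0, 0, 0; 0, 1, 0, 0; 0, 0, 1, 0; 0, 0, 0, 1] := by
      ext i j; fin_cases i <;> fin_cases j <;> rfl
    rw [ht, h1, h2, hd]
end

section
/- Let L(6) be the quadratic lattice with Gram matrix G₆ = [[2,0,0,−1],[0,2,0,−1],[0,0,2,−3],[−1,−1,−3,2]] with standard basis e₁,e₂,e₃,e₄, and let B be the rational matrix whose columns express the vectors (e₁+e₂)/2, (e₁−e₂)/2, e₃, e₄ of L(6)⊗ℚ. Then Bᵀ G₆ B is an integer matrix, and the lattice it defines is isomorphic to [-7]⊕[1]⊕[1]⊕[1]: there exists M ∈ GL(4,ℤ) with Mᵀ (Bᵀ G₆ B) M = diag(−7,1,1,1). -/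
open Matrix

/-- Passing from the lattice `L(6)` with Gram matrix `G₆` to the system
`(e₁+e₂)/2, (e₁-e₂)/2, e₃, e₄` (with matrix of columns `B`) yields an integer Gram
matrix, and the resulting lattice is isomorphic to `[-7]⊕[1]⊕[1]⊕[1]`. -/
theorem stmt_10 :
    ∃ A : Matrix (Fin 4) (Fin 4) ℤ,
      A.map (Int.cast : ℤ → ℚ) =
        (!![1/2, 1/2, 0, 0; 1/2, -1/2, 0, 0; 0, 0, 1, 0; 0, 0, 0, 1] :
            Matrix (Fin 4) (Fin 4) ℚ)ᵀ *
          !![2, 0, 0, -1; 0, 2, 0, -1; 0, 0, 2, -3; -1, -1, -3, 2] *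
          !![1/2, 1/2, 0, 0; 1/2, -1/2, 0, 0; 0, 0, 1, 0; 0, 0, 0, 1] ∧
      ∃ M : Matrix (Fin 4) (Fin 4) ℤ, IsUnit M.det ∧
        Mᵀ * A * M = Matrix.diagonal ![-7, 1, 1, 1] := by
  refine ⟨!![1,0,0,-1; 0,1,0,0; 0,0,2,-3; -1,0,-3,2], ?_,
    !![-3,-1,-1,0; 0,0,0,-1; -1,0,0,0; -3,-1,0,0], ?_, ?_⟩
  · ext i j
    fin_cases i <;> fin_cases j <;>
      norm_num [Matrix.mul_apply, Fin.sum_univ_succ, Matrix.vecHead, Matrix.vecTail]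
  · have : (!![-3,-1,-1,0; 0,0,0,-1; -1,0,0,0; -3,-1,0,0] : Matrix (Fin 4) (Fin 4) ℤ).det = 1 := by
      decide
    rw [this]; exact isUnit_one
  · decide
end

section
/- The even sublattice of the quadratic lattice [-7]⊕[1]⊕[1]⊕[1] — the sublattice of all vectors x with (x,x) even — has index 2 in [-7]⊕[1]⊕[1]⊕[1] and is isomorphic to the quadratic lattice with Gram matrix G₆ = [[2,0,0,−1],[0,2,0,−1],[0,0,2,−3],[−1,−1,−3,2]]. -/
open Matrix

private lemma sq_parity (a : ℤ) : 2 ∣ a * a - a := by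
  obtain ⟨k, hk⟩ := Int.even_mul_succ_self (a - 1)
  exact ⟨k, by linear_combination hk⟩

/-- The even sublattice of `[-7]⊕[1]⊕[1]⊕[1]` (all vectors of even inner square)
has index `2` and is isomorphic to the lattice with Gram matrix `G₆`. -/
theorem stmt_12 :
    ∃ H : AddSubgroup (Fin 4 → ℤ),
      (∀ x : Fin 4 → ℤ,
        x ∈ H ↔ 2 ∣ x ⬝ᵥ (Matrix.diagonal ![-7, 1, 1, 1]).mulVec x) ∧
      H.index = 2 ∧
      ∃ B : Matrix (Fin 4) (Fin 4) ℤ,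
        (∀ x : Fin 4 → ℤ, x ∈ H ↔ ∃! c : Fin 4 → ℤ, x = B.mulVec c) ∧
        ∃ M : Matrix (Fin 4) (Fin 4) ℤ, IsUnit M.det ∧
          Mᵀ * (Bᵀ * Matrix.diagonal ![-7, 1, 1, 1] * B) * M =
            !![2, 0, 0, -1; 0, 2, 0, -1; 0, 0, 2, -3; -1, -1, -3, 2] := by
  set f : (Fin 4 → ℤ) →+ ZMod 2 :=
    { toFun := fun x => ((x 0 + x 1 + x 2 + x 3 : ℤ) : ZMod 2)
      map_zero' := by simp
      map_add' := by intro x y; simp; push_cast; ring } with hf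
  refine ⟨f.ker, ?_, ?_, ?_⟩
  · -- membership characterization
    intro x
    have hm : x ∈ f.ker ↔ (2 : ℤ) ∣ (x 0 + x 1 + x 2 + x 3) := by
      rw [AddMonoidHom.mem_ker, hf]
      simp only [AddMonoidHom.coe_mk, ZeroHom.coe_mk]
      exact ZMod.intCast_zmod_eq_zero_iff_dvd _ 2
    rw [hm]
    have hq : x ⬝ᵥ (Matrix.diagonal ![-7, 1, 1, 1]).mulVec x =
        x 0 * (-7 * x 0) + x 1 * (1 * x 1) + x 2 * (1 * x 2) + x 3 * (1 * x 3) := by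
      simp [dotProduct, Matrix.mulVec, Matrix.diagonal, Fin.sum_univ_four]
    obtain ⟨k0, hk0⟩ := sq_parity (x 0)
    obtain ⟨k1, hk1⟩ := sq_parity (x 1)
    obtain ⟨k2, hk2⟩ := sq_parity (x 2)
    obtain ⟨k3, hk3⟩ := sq_parity (x 3)
    have key : x 0 * (-7 * x 0) + x 1 * (1 * x 1) + x 2 * (1 * x 2) + x 3 * (1 * x 3)
        = (x 0 + x 1 + x 2 + x 3) + 2 * (-4 * (x 0 * x 0) + k0 + k1 + k2 + k3) := by
      linear_combination hk0 + hk1 + hk2 + hk3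
    rw [hq, key]
    generalize (-4 * (x 0 * x 0) + k0 + k1 + k2 + k3 : ℤ) = t
    omega
  · -- index 2
    have hsurj : Function.Surjective f := by
      intro y
      fin_cases y
      · exact ⟨![0, 0, 0, 0], by simp [hf]; rfl⟩
      · exact ⟨![1, 0, 0, 0], by simp [hf]; rfl⟩
    rw [AddSubgroup.index_ker, AddMonoidHom.range_eq_top.mpr hsurj,
      AddSubgroup.card_top, Nat.card_zmod]
  · refine ⟨!![2, 1, 1, 1; 0, 1, 0, 0; 0, 0, 1, 0; 0, 0, 0, 1], ?_, ?_⟩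
    · intro x
      have hm : x ∈ f.ker ↔ (2 : ℤ) ∣ (x 0 + x 1 + x 2 + x 3) := by
        rw [AddMonoidHom.mem_ker, hf]
        simp only [AddMonoidHom.coe_mk, ZeroHom.coe_mk]
        exact ZMod.intCast_zmod_eq_zero_iff_dvd _ 2
      rw [hm]
      constructor
      · intro h
        refine ⟨![(x 0 - x 1 - x 2 - x 3) / 2, x 1, x 2, x 3], ?_, ?_⟩
        · funext i
          fin_cases i <;>
            simp [Matrix.mulVec, dotProduct, Fin.sum_univ_four] <;> omega
        · intro c hc
          have e0 := congrFun hc 0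
          have e1 := congrFun hc 1
          have e2 := congrFun hc 2
          have e3 := congrFun hc 3
          simp [Matrix.mulVec, dotProduct, Fin.sum_univ_four] at e0 e1 e2 e3
          funext i
          fin_cases i <;> simp <;> omega
      · rintro ⟨c, rfl, -⟩
        have e0 : (!![2, 1, 1, 1; 0, 1, 0, 0; 0, 0, 1, 0; 0, 0, 0, 1] : Matrix (Fin 4) (Fin 4) ℤ).mulVec c 0 = 2 * c 0 + c 1 + c 2 + c 3 := by
          simp [Matrix.mulVec, dotProduct, Fin.sum_univ_four]
        have e1 : (!![2, 1, 1, 1; 0, 1, 0, 0; 0, 0, 1, 0; 0, 0, 0, 1] : Matrix (Fin 4) (Fin 4) ℤ).mulVec c 1 = c 1 := by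
          simp [Matrix.mulVec, dotProduct, Fin.sum_univ_four]
        have e2 : (!![2, 1, 1, 1; 0, 1, 0, 0; 0, 0, 1, 0; 0, 0, 0, 1] : Matrix (Fin 4) (Fin 4) ℤ).mulVec c 2 = c 2 := by
          simp [Matrix.mulVec, dotProduct, Fin.sum_univ_four]
        have e3 : (!![2, 1, 1, 1; 0, 1, 0, 0; 0, 0, 1, 0; 0, 0, 0, 1] : Matrix (Fin 4) (Fin 4) ℤ).mulVec c 3 = c 3 := by
          simp [Matrix.mulVec, dotProduct, Fin.sum_univ_four]
        rw [e0, e1, e2, e3]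
        omega
    · refine ⟨!![1, 1, 0, 0; -3, 0, 0, -2; 0, -1, -1, 2; 0, -1, 1, -1], ?_, ?_⟩
      · have : (!![1, 1, 0, 0; -3, 0, 0, -2; 0, -1, -1, 2; 0, -1, 1, -1] : Matrix (Fin 4) (Fin 4) ℤ).det = 1 := by
          decide
        rw [this]; exact isUnit_one
      · decide
end

section
/- The even sublattice of the quadratic lattice [-15]⊕[1]⊕[1]⊕[1] — the sublattice of all vectors x with (x,x) even — has index 2 in [-15]⊕[1]⊕[1]⊕[1] and is isomorphic to the quadratic lattice with Gram matrix G₇ = [[2,0,−1,−1],[0,2,−1,−1],[−1,−1,2,−3],[−1,−1,−3,2]]. -/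
open Matrix

def φ13 : (Fin 4 → ℤ) →+ ZMod 2 :=
  (Int.castAddHom (ZMod 2)).comp
    { toFun := fun x => x 0 + x 1 + x 2 + x 3
      map_zero' := by simp
      map_add' := by intro a b; simp [Pi.add_apply]; ring }

/-- The even sublattice of `[-15]⊕[1]⊕[1]⊕[1]` (all vectors of even inner square)
has index `2` and is isomorphic to the lattice with Gram matrix `G₇`. -/
theorem stmt_13 :
    ∃ H : AddSubgroup (Fin 4 → ℤ),
      (∀ x : Fin 4 → ℤ,
        x ∈ H ↔ 2 ∣ x ⬝ᵥ (Matrix.diagonal ![-15, 1, 1, 1]).mulVec x) ∧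
      H.index = 2 ∧
      ∃ B : Matrix (Fin 4) (Fin 4) ℤ,
        (∀ x : Fin 4 → ℤ, x ∈ H ↔ ∃! c : Fin 4 → ℤ, x = B.mulVec c) ∧
        ∃ M : Matrix (Fin 4) (Fin 4) ℤ, IsUnit M.det ∧
          Mᵀ * (Bᵀ * Matrix.diagonal ![-15, 1, 1, 1] * B) * M =
            !![2, 0, -1, -1; 0, 2, -1, -1; -1, -1, 2, -3; -1, -1, -3, 2] := by
  have hmem : ∀ x : Fin 4 → ℤ, x ∈ φ13.ker ↔ (2:ℤ) ∣ x 0 + x 1 + x 2 + x 3 := by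
    intro x
    rw [AddMonoidHom.mem_ker]
    simp only [φ13, AddMonoidHom.coe_comp, Function.comp_apply, AddMonoidHom.coe_mk,
      ZeroHom.coe_mk, Int.coe_castAddHom]
    rw [ZMod.intCast_zmod_eq_zero_iff_dvd]
    norm_num
  have hdot : ∀ x : Fin 4 → ℤ,
      x ⬝ᵥ (Matrix.diagonal ![-15, 1, 1, 1]).mulVec x
        = -15 * (x 0 * x 0) + x 1 * x 1 + x 2 * x 2 + x 3 * x 3 := by
    intro x
    simp [dotProduct, Matrix.mulVec, Matrix.diagonal, Fin.sum_univ_four]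
    ring
  have hsq : ∀ a : ℤ, ∃ k : ℤ, a * a + a = 2 * k := by
    intro a
    obtain ⟨k, hk⟩ := Int.even_mul_succ_self a
    exact ⟨k, by linear_combination hk⟩
  refine ⟨φ13.ker, ?_, ?_, ?_⟩
  · intro x
    rw [hmem, hdot]
    obtain ⟨k0, h0⟩ := hsq (x 0)
    obtain ⟨k1, h1⟩ := hsq (x 1)
    obtain ⟨k2, h2⟩ := hsq (x 2)
    obtain ⟨k3, h3⟩ := hsq (x 3)
    have key : -15 * (x 0 * x 0) + x 1 * x 1 + x 2 * x 2 + x 3 * x 3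
        = 2 * (-15 * k0 + 7 * x 0 + k1 - x 1 + k2 - x 2 + k3 - x 3)
          + (x 0 + x 1 + x 2 + x 3) := by linear_combination -15 * h0 + h1 + h2 + h3
    rw [key]
    constructor
    · intro h; omega
    · rintro ⟨m, hm⟩
      exact ⟨m - (-15 * k0 + 7 * x 0 + k1 - x 1 + k2 - x 2 + k3 - x 3), by linear_combination hm⟩
  · rw [AddSubgroup.index_ker]
    have hsurj : Function.Surjective φ13 := by
      intro y
      obtain ⟨z, hz⟩ := ZMod.intCast_surjective y
      refine ⟨![z, 0, 0, 0], ?_⟩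
      simp [φ13, hz]
    have : φ13.range = ⊤ := AddMonoidHom.range_eq_top.mpr hsurj
    rw [this, AddSubgroup.card_top, Nat.card_zmod]
  · refine ⟨!![1,0,0,0; 1,1,0,0; 0,1,1,0; 0,0,1,2], ?_, ?_⟩
    · intro x
      rw [hmem]
      have hBv : ∀ c : Fin 4 → ℤ,
          (!![1,0,0,0; 1,1,0,0; 0,1,1,0; 0,0,1,2] : Matrix (Fin 4) (Fin 4) ℤ).mulVec c
            = ![c 0, c 0 + c 1, c 1 + c 2, c 2 + 2 * c 3] := by
        intro c
        funext i
        fin_cases i <;>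
          simp [Matrix.mulVec, dotProduct, Fin.sum_univ_four] <;> ring
      have hxc : ∀ c : Fin 4 → ℤ,
          x = (!![1,0,0,0; 1,1,0,0; 0,1,1,0; 0,0,1,2] : Matrix (Fin 4) (Fin 4) ℤ).mulVec c ↔
            (x 0 = c 0 ∧ x 1 = c 0 + c 1 ∧ x 2 = c 1 + c 2 ∧ x 3 = c 2 + 2 * c 3) := by
        intro c
        rw [hBv]
        constructor
        · intro h
          exact ⟨congrFun h 0, congrFun h 1, congrFun h 2, congrFun h 3⟩
        · rintro ⟨h0, h1, h2, h3⟩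
          funext i
          fin_cases i <;> simpa
      constructor
      · rintro ⟨k, hk⟩
        refine ⟨![x 0, x 1 - x 0, x 0 - x 1 + x 2, k - x 2 - x 0], ?_, ?_⟩
        · exact (hxc _).mpr ⟨rfl, by simp <;> ring, by simp <;> ring, by simp <;> omega⟩
        · intro c hc
          replace hc := (hxc c).mp hc
          obtain ⟨h0, h1, h2, h3⟩ := hc
          funext i
          fin_cases i <;> simp <;> omega
      · rintro ⟨c, hc, -⟩
        replace hc := (hxc c).mp hc
        obtain ⟨h0, h1, h2, h3⟩ := hc
        exact ⟨c 0 + c 1 + c 2 + c 3, by omega⟩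
    · refine ⟨!![-4,0,-2,-1; -3,-1,0,-1; -4,2,-3,-2; -4,-1,-2,0], ?_, ?_⟩
      · have : (!![-4,0,-2,-1; -3,-1,0,-1; -4,2,-3,-2; -4,-1,-2,0] : Matrix (Fin 4) (Fin 4) ℤ).det = 1 := by
          decide
        rw [this]
        exact isUnit_one
      · decide
end

section
/- The quadratic form −7x₁² + x₂² + x₃² + x₄² over ℚ is anisotropic: if x ∈ ℚ⁴ satisfies −7x₁² + x₂² + x₃² + x₄² = 0, then x = 0. -/
private lemma zmod8_aux : ∀ u v w t : ZMod 8, 7 * u ^ 2 = v ^ 2 + w ^ 2 + t ^ 2 →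
    (u = 0 ∨ u = 2 ∨ u = 4 ∨ u = 6) ∧ (v = 0 ∨ v = 2 ∨ v = 4 ∨ v = 6) ∧
    (w = 0 ∨ w = 2 ∨ w = 4 ∨ w = 6) ∧ (t = 0 ∨ t = 2 ∨ t = 4 ∨ t = 6) := by decide

private lemma even_of_zmod8 (a : ℤ)
    (h : (a : ZMod 8) = 0 ∨ (a : ZMod 8) = 2 ∨ (a : ZMod 8) = 4 ∨ (a : ZMod 8) = 6) :
    (2 : ℤ) ∣ a := by
  suffices h2 : (a : ZMod 2) = 0 by
    exact_mod_cast (ZMod.intCast_zmod_eq_zero_iff_dvd a 2).mp h2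
  have hc : ((a : ZMod 2)) = ZMod.castHom (by norm_num : (2:ℕ) ∣ 8) (ZMod 2) (a : ZMod 8) := by
    simp
  rcases h with h' | h' | h' | h' <;> rw [hc, h'] <;> decide

private lemma descent_key : ∀ n : ℕ, ∀ a b c d : ℤ, a.natAbs = n →
    7 * a ^ 2 = b ^ 2 + c ^ 2 + d ^ 2 → a = 0 ∧ b = 0 ∧ c = 0 ∧ d = 0 := by
  intro n
  induction n using Nat.strong_induction_on with
  | _ n ih =>
    intro a b c d hn h
    by_cases ha : a = 0
    · subst ha
      refine ⟨rfl, ?_, ?_, ?_⟩ <;>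
        nlinarith [sq_nonneg b, sq_nonneg c, sq_nonneg d]
    · have h8 : 7 * (a : ZMod 8) ^ 2 = (b : ZMod 8) ^ 2 + (c : ZMod 8) ^ 2 + (d : ZMod 8) ^ 2 := by
        exact_mod_cast congrArg (Int.cast : ℤ → ZMod 8) h
      obtain ⟨hu, hv, hw, ht⟩ := zmod8_aux _ _ _ _ h8
      obtain ⟨a', rfl⟩ := even_of_zmod8 a hu
      obtain ⟨b', rfl⟩ := even_of_zmod8 b hv
      obtain ⟨c', rfl⟩ := even_of_zmod8 c hw
      obtain ⟨d', rfl⟩ := even_of_zmod8 d ht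
      have h4 : (4:ℤ) * (7 * a' ^ 2) = 4 * (b' ^ 2 + c' ^ 2 + d' ^ 2) := by linear_combination h
      have h' : 7 * a' ^ 2 = b' ^ 2 + c' ^ 2 + d' ^ 2 :=
        mul_left_cancel₀ (by norm_num) h4
      have ha' : a' ≠ 0 := fun h0 => ha (by rw [h0, mul_zero])
      have hlt : a'.natAbs < n := by
        subst hn
        rw [Int.natAbs_mul, (by rfl : (2:ℤ).natAbs = 2)]
        have : a'.natAbs ≠ 0 := Int.natAbs_ne_zero.mpr ha'
        omega
      obtain ⟨e1, e2, e3, e4⟩ := ih a'.natAbs hlt a' b' c' d' rfl h'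
      exact ⟨by rw [e1, mul_zero], by rw [e2, mul_zero], by rw [e3, mul_zero],
        by rw [e4, mul_zero]⟩

/-- The quadratic form `-7x₁² + x₂² + x₃² + x₄²` over `ℚ` is anisotropic. -/
theorem stmt_16 (x : Fin 4 → ℚ)
    (h : -7 * x 0 ^ 2 + x 1 ^ 2 + x 2 ^ 2 + x 3 ^ 2 = 0) : x = 0 := by
  set D : ℤ := (x 0).den * (x 1).den * (x 2).den * (x 3).den with hD
  have hDpos : 0 < D := by
    have h0 := (x 0).pos
    have h1 := (x 1).pos
    have h2 := (x 2).pos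
    have h3 := (x 3).pos
    positivity
  have hDQ : (D : ℚ) ≠ 0 := by exact_mod_cast hDpos.ne'
  have key : ∀ (r : ℚ) (k : ℤ), D = r.den * k → ∃ a : ℤ, (a : ℚ) = r * D := by
    intro r k hk
    refine ⟨r.num * k, ?_⟩
    have hden : ((r.den : ℚ)) ≠ 0 := by exact_mod_cast r.den_nz
    have hnum : ((r.num : ℚ)) = r * r.den := by
      exact (Rat.mul_den_eq_num r).symm
    push_cast [hk]
    rw [hnum]; ring
  obtain ⟨a0, ha0⟩ := key (x 0) ((x 1).den * (x 2).den * (x 3).den) (by push_cast [hD]; ring)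
  obtain ⟨a1, ha1⟩ := key (x 1) ((x 0).den * (x 2).den * (x 3).den) (by push_cast [hD]; ring)
  obtain ⟨a2, ha2⟩ := key (x 2) ((x 0).den * (x 1).den * (x 3).den) (by push_cast [hD]; ring)
  obtain ⟨a3, ha3⟩ := key (x 3) ((x 0).den * (x 1).den * (x 2).den) (by push_cast [hD]; ring)
  have hq : 7 * (a0 : ℚ) ^ 2 = (a1 : ℚ) ^ 2 + (a2 : ℚ) ^ 2 + (a3 : ℚ) ^ 2 := by
    rw [ha0, ha1, ha2, ha3]
    linear_combination (-(D:ℚ)^2) * h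
  have hz : 7 * a0 ^ 2 = a1 ^ 2 + a2 ^ 2 + a3 ^ 2 := by exact_mod_cast hq
  obtain ⟨e0, e1, e2, e3⟩ := descent_key a0.natAbs a0 a1 a2 a3 rfl hz
  rw [e0] at ha0; rw [e1] at ha1; rw [e2] at ha2; rw [e3] at ha3
  push_cast at ha0 ha1 ha2 ha3
  have hx0 : x 0 = 0 := (mul_eq_zero.mp ha0.symm).resolve_right hDQ
  have hx1 : x 1 = 0 := (mul_eq_zero.mp ha1.symm).resolve_right hDQ
  have hx2 : x 2 = 0 := (mul_eq_zero.mp ha2.symm).resolve_right hDQ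
  have hx3 : x 3 = 0 := (mul_eq_zero.mp ha3.symm).resolve_right hDQ
  funext i
  fin_cases i
  · exact hx0
  · exact hx1
  · exact hx2
  · exact hx3
end

section
/- The quadratic form −15x₁² + x₂² + x₃² + x₄² over ℚ is anisotropic: if x ∈ ℚ⁴ satisfies −15x₁² + x₂² + x₃² + x₄² = 0, then x = 0. -/
lemma zmod8_ne7 : ∀ a b c : ZMod 8, a^2+b^2+c^2 ≠ 7 := by decide

lemma zmod4_sq : ∀ u v w : ZMod 4, u^2+v^2+w^2 = 0 → u^2=0 ∧ v^2=0 ∧ w^2=0 := by decide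

lemma odd_sq_zmod8 (z : ℤ) (hz : Odd z) : ((z : ZMod 8))^2 = 1 := by
  obtain ⟨k, rfl⟩ := hz
  obtain ⟨m, hm⟩ := Int.even_mul_succ_self k
  have h1 : (2*k+1)^2 = 8*m + 1 := by nlinarith [hm]
  have h80 : ((8:ℤ) : ZMod 8) = 0 := by decide
  calc ((2*k+1 : ℤ) : ZMod 8)^2 = (((2*k+1)^2 : ℤ) : ZMod 8) := by push_cast; ring
    _ = ((8*m+1 : ℤ) : ZMod 8) := by rw [h1]
    _ = ((8:ℤ) : ZMod 8) * (m:ZMod 8) + 1 := by push_cast; ring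
    _ = 1 := by rw [h80, zero_mul, zero_add]

lemma odd_sq_zmod4 (z : ℤ) (hz : Odd z) : ((z : ZMod 4))^2 = 1 := by
  obtain ⟨k, rfl⟩ := hz
  have h1 : (2*k+1)^2 = 4*(k^2+k) + 1 := by ring
  have h40 : ((4:ℤ) : ZMod 4) = 0 := by decide
  calc ((2*k+1 : ℤ) : ZMod 4)^2 = (((2*k+1)^2 : ℤ) : ZMod 4) := by push_cast; ring
    _ = ((4*(k^2+k)+1 : ℤ) : ZMod 4) := by rw [h1]
    _ = ((4:ℤ) : ZMod 4) * ((k^2+k : ℤ):ZMod 4) + 1 := by push_cast; ring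
    _ = 1 := by rw [h40, zero_mul, zero_add]

lemma even_of_sq_zmod4 (z : ℤ) (hz : ((z : ZMod 4))^2 = 0) : Even z := by
  rcases Int.even_or_odd z with h | h
  · exact h
  · rw [odd_sq_zmod4 z h] at hz; exact absurd hz (by decide)

lemma key : ∀ n : ℕ, ∀ d a b c : ℤ, d.natAbs ≤ n → a^2+b^2+c^2 = 15*d^2 → d = 0 := by
  intro n
  induction n using Nat.strong_induction_on with
  | _ n ih =>
  intro d a b c hdn h
  by_contra hd0
  rcases Int.even_or_odd d with he | ho
  · obtain ⟨e, he⟩ := he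
    have hd2 : d = 2*e := by omega
    subst hd2
    have h4 : a^2+b^2+c^2 = 4*(15*e^2) := by linarith
    have hcast : ((a:ZMod 4))^2 + (b:ZMod 4)^2 + (c:ZMod 4)^2 = 0 := by
      have hc := congrArg (fun z : ℤ => (z : ZMod 4)) h4
      push_cast at hc
      rw [hc]
      have h40 : (4 : ZMod 4) = 0 := by decide
      rw [h40, zero_mul]
    obtain ⟨ha, hb, hc⟩ := zmod4_sq _ _ _ hcast
    obtain ⟨a', rfl⟩ := even_of_sq_zmod4 a ha
    obtain ⟨b', rfl⟩ := even_of_sq_zmod4 b hb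
    obtain ⟨c', rfl⟩ := even_of_sq_zmod4 c hc
    have h' : a'^2+b'^2+c'^2 = 15*e^2 := by nlinarith [h4]
    have he0 : e = 0 := by
      refine ih e.natAbs ?_ e a' b' c' le_rfl h'
      have hne : e ≠ 0 := fun h0 => hd0 (by omega)
      omega
    exact hd0 (by omega)
  · have hd8 : ((d : ZMod 8))^2 = 1 := odd_sq_zmod8 d ho
    have hcast : ((a:ZMod 8))^2 + (b:ZMod 8)^2 + (c:ZMod 8)^2 = 7 := by
      have hc := congrArg (fun z : ℤ => (z : ZMod 8)) h
      push_cast at hc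
      rw [hc, hd8]
      decide
    exact zmod8_ne7 _ _ _ hcast

/-- The quadratic form `-15x₁² + x₂² + x₃² + x₄²` over `ℚ` is anisotropic. -/
theorem stmt_17 (x : Fin 4 → ℚ)
    (h : -15 * x 0 ^ 2 + x 1 ^ 2 + x 2 ^ 2 + x 3 ^ 2 = 0) : x = 0 := by
  have hnum : ∀ i : Fin 4, ((x i).num : ℚ) = x i * (x i).den := by
    intro i
    have hden : ((x i).den : ℚ) ≠ 0 := by exact_mod_cast (x i).den_ne_zero
    exact (div_eq_iff hden).mp (Rat.num_div_den (x i))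
  set D : ℤ := ((x 0).den : ℤ) * (x 1).den * (x 2).den * (x 3).den with hDdef
  have hD : (D : ℚ) ≠ 0 := by
    norm_cast
    positivity
  set A0 : ℤ := ((x 1).den : ℤ) * (x 2).den * (x 3).den * (x 0).num with hA0def
  set A1 : ℤ := ((x 0).den : ℤ) * (x 2).den * (x 3).den * (x 1).num with hA1def
  set A2 : ℤ := ((x 0).den : ℤ) * (x 1).den * (x 3).den * (x 2).num with hA2def
  set A3 : ℤ := ((x 0).den : ℤ) * (x 1).den * (x 2).den * (x 3).num with hA3def
  have hA0 : (A0 : ℚ) = D * x 0 := by rw [hA0def, hDdef]; push_cast [hnum 0]; ring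
  have hA1 : (A1 : ℚ) = D * x 1 := by rw [hA1def, hDdef]; push_cast [hnum 1]; ring
  have hA2 : (A2 : ℚ) = D * x 2 := by rw [hA2def, hDdef]; push_cast [hnum 2]; ring
  have hA3 : (A3 : ℚ) = D * x 3 := by rw [hA3def, hDdef]; push_cast [hnum 3]; ring
  have hint : A1^2 + A2^2 + A3^2 = 15 * A0^2 := by
    have hq : (A1:ℚ)^2 + (A2:ℚ)^2 + (A3:ℚ)^2 = 15 * (A0:ℚ)^2 := by
      have h' : x 1^2 + x 2^2 + x 3^2 = 15 * x 0^2 := by linarith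
      rw [hA0, hA1, hA2, hA3]
      calc ((D:ℚ)*x 1)^2 + ((D:ℚ)*x 2)^2 + ((D:ℚ)*x 3)^2
          = (D:ℚ)^2 * (x 1^2 + x 2^2 + x 3^2) := by ring
        _ = (D:ℚ)^2 * (15 * x 0^2) := by rw [h']
        _ = 15 * ((D:ℚ) * x 0)^2 := by ring
    exact_mod_cast hq
  have hA00 : A0 = 0 := key A0.natAbs A0 A1 A2 A3 le_rfl hint
  have hx0 : x 0 = 0 := by
    have : (D:ℚ) * x 0 = 0 := by rw [← hA0, hA00]; norm_num
    exact (mul_eq_zero.mp this).resolve_left hD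
  have hsum : x 1 ^ 2 + x 2 ^ 2 + x 3 ^ 2 = 0 := by rw [hx0] at h; linarith
  have h1 : x 1 = 0 := by nlinarith [sq_nonneg (x 1), sq_nonneg (x 2), sq_nonneg (x 3)]
  have h2 : x 2 = 0 := by nlinarith [sq_nonneg (x 1), sq_nonneg (x 2), sq_nonneg (x 3)]
  have h3 : x 3 = 0 := by nlinarith [sq_nonneg (x 1), sq_nonneg (x 2), sq_nonneg (x 3)]
  funext i
  fin_cases i <;> simpa
end

section
/- The quadratic form −3x₁² + 5x₂² + x₃² + x₄² over ℚ is anisotropic: if x ∈ ℚ⁴ satisfies −3x₁² + 5x₂² + x₃² + x₄² = 0, then x = 0. -/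
lemma stmt18_mod8 : ∀ a b c d : ZMod 8, -3*a^2+5*b^2+c^2+d^2 = 0 →
    (ZMod.castHom (by norm_num : (2:ℕ) ∣ 8) (ZMod 2)) a = 0 ∧
    (ZMod.castHom (by norm_num : (2:ℕ) ∣ 8) (ZMod 2)) b = 0 ∧
    (ZMod.castHom (by norm_num : (2:ℕ) ∣ 8) (ZMod 2)) c = 0 ∧
    (ZMod.castHom (by norm_num : (2:ℕ) ∣ 8) (ZMod 2)) d = 0 := by decide

lemma stmt18_even (a b c d : ℤ) (h : -3*a^2+5*b^2+c^2+d^2 = 0) :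
    2 ∣ a ∧ 2 ∣ b ∧ 2 ∣ c ∧ 2 ∣ d := by
  have h8 : -3*(a : ZMod 8)^2+5*(b:ZMod 8)^2+(c:ZMod 8)^2+(d:ZMod 8)^2 = 0 := by
    have := congrArg (Int.cast : ℤ → ZMod 8) h
    push_cast at this
    linear_combination this
  obtain ⟨ha, hb, hc, hd⟩ := stmt18_mod8 _ _ _ _ h8
  rw [map_intCast] at ha hb hc hd
  exact ⟨(ZMod.intCast_zmod_eq_zero_iff_dvd _ 2).mp (by exact_mod_cast ha),
    (ZMod.intCast_zmod_eq_zero_iff_dvd _ 2).mp (by exact_mod_cast hb),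
    (ZMod.intCast_zmod_eq_zero_iff_dvd _ 2).mp (by exact_mod_cast hc),
    (ZMod.intCast_zmod_eq_zero_iff_dvd _ 2).mp (by exact_mod_cast hd)⟩

lemma stmt18_int : ∀ n : ℕ, ∀ a b c d : ℤ,
    a.natAbs + b.natAbs + c.natAbs + d.natAbs = n →
    -3*a^2+5*b^2+c^2+d^2 = 0 → a = 0 ∧ b = 0 ∧ c = 0 ∧ d = 0 := by
  intro n
  induction n using Nat.strong_induction_on with
  | _ n ih =>
    intro a b c d hsum h
    rcases Nat.eq_zero_or_pos n with hn | hn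
    · subst hn; omega
    · obtain ⟨⟨a', rfl⟩, ⟨b', rfl⟩, ⟨c', rfl⟩, ⟨d', rfl⟩⟩ := stmt18_even a b c d h
      have h' : -3*a'^2+5*b'^2+c'^2+d'^2 = 0 := by linarith [h]
      have hsum' : a'.natAbs + b'.natAbs + c'.natAbs + d'.natAbs = n / 2 := by
        have h2 : ((2:ℤ)).natAbs = 2 := rfl
        simp only [Int.natAbs_mul, h2] at hsum ⊢
        omega
      obtain ⟨ha, hb, hc, hd⟩ := ih (n/2) (by omega) a' b' c' d' hsum' h'
      exact ⟨by omega, by omega, by omega, by omega⟩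

/-- The quadratic form `-3x₁² + 5x₂² + x₃² + x₄²` over `ℚ` is anisotropic. -/
theorem stmt_18 (x : Fin 4 → ℚ)
    (h : -3 * x 0 ^ 2 + 5 * x 1 ^ 2 + x 2 ^ 2 + x 3 ^ 2 = 0) : x = 0 := by
  set D : ℤ := (x 0).den * (x 1).den * (x 2).den * (x 3).den with hD
  have hDne : (D : ℚ) ≠ 0 := by
    simp only [hD]
    push_cast
    positivity
  have e0 : (x 0) * ((x 0).den : ℚ) = (x 0).num := Rat.mul_den_eq_num _
  have e1 : (x 1) * ((x 1).den : ℚ) = (x 1).num := Rat.mul_den_eq_num _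
  have e2 : (x 2) * ((x 2).den : ℚ) = (x 2).num := Rat.mul_den_eq_num _
  have e3 : (x 3) * ((x 3).den : ℚ) = (x 3).num := Rat.mul_den_eq_num _
  set a : ℤ := (x 0).num * ((x 1).den * (x 2).den * (x 3).den) with hA
  set b : ℤ := (x 1).num * ((x 0).den * (x 2).den * (x 3).den) with hB
  set c : ℤ := (x 2).num * ((x 0).den * (x 1).den * (x 3).den) with hC
  set d : ℤ := (x 3).num * ((x 0).den * (x 1).den * (x 2).den) with hd4
  have ha : (a : ℚ) = x 0 * D := by
    rw [hA, hD]; push_cast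
    linear_combination (-((x 1).den * (x 2).den * (x 3).den : ℚ)) * e0
  have hb : (b : ℚ) = x 1 * D := by
    rw [hB, hD]; push_cast
    linear_combination (-((x 0).den * (x 2).den * (x 3).den : ℚ)) * e1
  have hc : (c : ℚ) = x 2 * D := by
    rw [hC, hD]; push_cast
    linear_combination (-((x 0).den * (x 1).den * (x 3).den : ℚ)) * e2
  have hd : (d : ℚ) = x 3 * D := by
    rw [hd4, hD]; push_cast
    linear_combination (-((x 0).den * (x 1).den * (x 2).den : ℚ)) * e3
  have key : -3*(a:ℚ)^2+5*(b:ℚ)^2+(c:ℚ)^2+(d:ℚ)^2 = 0 := by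
    rw [ha, hb, hc, hd]
    linear_combination (D:ℚ)^2 * h
  have keyZ : -3*a^2+5*b^2+c^2+d^2 = 0 := by exact_mod_cast key
  obtain ⟨ha0, hb0, hc0, hd0⟩ := stmt18_int _ a b c d rfl keyZ
  have hx : ∀ (y : ℚ) (m : ℤ), (m : ℚ) = y * D → m = 0 → y = 0 := by
    intro y m hm h0
    rw [h0] at hm
    push_cast at hm
    exact ((mul_eq_zero.mp hm.symm).resolve_right hDne)
  funext i
  fin_cases i
  · exact hx _ _ ha ha0
  · exact hx _ _ hb hb0
  · exact hx _ _ hc hc0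
  · exact hx _ _ hd hd0
end
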